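/- arXiv:1505.05498 — 6 statements merged into one kernel-verified Lean document; each statement's English description precedes it below -/
import Mathlib

section
/- If φ: (0,∞) → (0,∞) satisfies the scaling condition a₁λ^{2δ₁}φ(r) ≤ φ(λr) ≤ a₂λ^{2δ₂}φ(r) for all λ ≥ 1 and r > 0, with 0 < δ₁ ≤ δ₂ < 1 and a₁ ∈ (0,1], then there exists a constant C > 0 such that ∫_r^∞ ds/(s·φ(s)) ≤ C/φ(r) for all r > 0. -/
open MeasureTheory Set

/-! The lower scaling bound gives `φ s ≥ a₁ (s / r) ^ (2δ₁) φ r` for `s > r`, so the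
integrand is at most `r ^ (2δ₁) / (a₁ φ r) · s ^ (-2δ₁ - 1)`, whose tail integral is `1 / (2 a₁ δ₁ φ r)`. -/

theorem lintegral_Ioi_rpow_neg_sub_one {r β : ℝ} (hr : 0 < r) (hβ : 0 < β) :
    ∫⁻ s in Ioi r, ENNReal.ofReal (s ^ (-β - 1)) = ENNReal.ofReal (r ^ (-β) / β) := by
  have hexp : -β - 1 < -1 := by linarith
  rw [← ofReal_integral_eq_lintegral_ofReal (integrableOn_Ioi_rpow_of_lt hexp hr),
    integral_Ioi_rpow_of_lt hexp hr]
  · congr 1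
    rw [show -β - 1 + 1 = -β by ring, neg_div, div_neg, neg_neg]
  · filter_upwards [ae_restrict_mem measurableSet_Ioi] with s hs
    exact Real.rpow_nonneg (hr.trans hs).le _

theorem one_div_mul_le_of_lower_scaling {φ : ℝ → ℝ} {a β r s : ℝ} (ha : 0 < a) (hr : 0 < r)
    (hrs : r < s) (hφr : 0 < φ r) (hlow : a * (s / r) ^ β * φ r ≤ φ s) :
    1 / (s * φ s) ≤ r ^ β / (a * φ r) * s ^ (-β - 1) := by
  have hs : 0 < s := hr.trans hrs
  calc 1 / (s * φ s) ≤ 1 / (s * (a * (s / r) ^ β * φ r)) := by gcongr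
    _ = r ^ β / (a * φ r) * s ^ (-β - 1) := by
      rw [Real.div_rpow hs.le hr.le, Real.rpow_sub hs, Real.rpow_neg hs.le, Real.rpow_one]
      have := Real.rpow_pos_of_pos hs β
      have := Real.rpow_pos_of_pos hr β
      field_simp

theorem lintegral_Ioi_inv_mul_le_of_lower_scaling {φ : ℝ → ℝ} {a β r : ℝ} (ha : 0 < a)
    (hβ : 0 < β) (hr : 0 < r) (hφr : 0 < φ r)
    (hlow : ∀ s, r < s → a * (s / r) ^ β * φ r ≤ φ s) :
    ∫⁻ s in Ioi r, ENNReal.ofReal (1 / (s * φ s)) ≤ ENNReal.ofReal (1 / (a * β) / φ r) := by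
  have hK : 0 ≤ r ^ β / (a * φ r) := by positivity
  calc ∫⁻ s in Ioi r, ENNReal.ofReal (1 / (s * φ s))
      ≤ ∫⁻ s in Ioi r, ENNReal.ofReal (r ^ β / (a * φ r)) * ENNReal.ofReal (s ^ (-β - 1)) := by
        refine setLIntegral_mono' measurableSet_Ioi fun s hs => ?_
        rw [← ENNReal.ofReal_mul hK]
        exact ENNReal.ofReal_le_ofReal (one_div_mul_le_of_lower_scaling ha hr hs hφr (hlow s hs))
    _ = ENNReal.ofReal (1 / (a * β) / φ r) := by
        rw [lintegral_const_mul' _ _ ENNReal.ofReal_ne_top, lintegral_Ioi_rpow_neg_sub_one hr hβ,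
          ← ENNReal.ofReal_mul hK, Real.rpow_neg hr.le]
        congr 1
        have := Real.rpow_pos_of_pos hr β
        field_simp

theorem tail_integral_bound_general
    (φ : ℝ → ℝ) (a₁ a₂ δ₁ δ₂ : ℝ)
    (ha₁ : 0 < a₁)
    (hδ₁ : 0 < δ₁)
    (hφpos : ∀ r : ℝ, 0 < r → 0 < φ r)
    (hscal : ∀ l r : ℝ, 1 ≤ l → 0 < r →
      a₁ * l ^ (2 * δ₁) * φ r ≤ φ (l * r) ∧ φ (l * r) ≤ a₂ * l ^ (2 * δ₂) * φ r) :
    ∃ C : ℝ, 0 < C ∧ ∀ r : ℝ, 0 < r →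
      ∫⁻ s in Ioi r, ENNReal.ofReal (1 / (s * φ s)) ≤ ENNReal.ofReal (C / φ r) := by
  refine ⟨1 / (a₁ * (2 * δ₁)), by positivity, fun r hr => ?_⟩
  refine lintegral_Ioi_inv_mul_le_of_lower_scaling ha₁ (by positivity) hr (hφpos r hr)
    fun s hrs => ?_
  have hlow := (hscal (s / r) r ((one_le_div hr).mpr hrs.le) hr).1
  rwa [div_mul_cancel₀ s hr.ne'] at hlow

/-- If φ satisfies the two-sided scaling condition with exponents 2δ₁, 2δ₂,
then the tail integral ∫_r^∞ ds/(s φ(s)) is bounded by C/φ(r). -/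
theorem tail_integral_bound
    (φ : ℝ → ℝ) (a₁ a₂ δ₁ δ₂ : ℝ)
    (ha₁ : 0 < a₁) (ha₁' : a₁ ≤ 1) (ha₂ : 1 ≤ a₂)
    (hδ₁ : 0 < δ₁) (hδ : δ₁ ≤ δ₂) (hδ₂ : δ₂ < 1)
    (hφpos : ∀ r : ℝ, 0 < r → 0 < φ r)
    (hscal : ∀ l r : ℝ, 1 ≤ l → 0 < r →
      a₁ * l ^ (2 * δ₁) * φ r ≤ φ (l * r) ∧ φ (l * r) ≤ a₂ * l ^ (2 * δ₂) * φ r) :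
    ∃ C : ℝ, 0 < C ∧ ∀ r : ℝ, 0 < r →
      ∫⁻ s in Ioi r, ENNReal.ofReal (1 / (s * φ s)) ≤ ENNReal.ofReal (C / φ r) :=
  tail_integral_bound_general φ a₁ a₂ δ₁ δ₂ ha₁ hδ₁ hφpos hscal
end

section
/- Let ψ: (0,1] → (0,∞) satisfy: there exist constants c₁ ∈ (0,1], c₂ ∈ [1,∞) and exponents 0 < m < M < 1 with c₁(R/r)^{m/2} ≤ ψ(R)/ψ(r) ≤ c₂(R/r)^{(M+1)/2} for all 0 < r ≤ R ≤ 1. Then there exists a constant C > 0 such that for every bounded continuous function f: ℝᵈ → ℝ, sup_{x, 0<|h|≤1} |f(x+h)−f(x)|/ψ(|h|) ≤ C(‖f‖_∞ + sup_{x, 0<|h|≤1} |f(x+h)−2f(x)+f(x−h)|/ψ(|h|)), where the inequality is interpreted in the extended reals (the left side is finite if the right side is). -/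
/-!
Doubling the step, `Δ_h f(x) = (Δ_{2h} f(x) - Δ²_h f(x + h)) / 2`. Iterating this `N` times with
`2^N |h| ≤ 1 < 2^(N+1) |h|` bounds `|Δ_h f(x)|` by `2 ‖f‖_∞ 2^(-N)` plus
`[[f]] Σ_{k<N} ψ(2^k |h|) / 2^(k+1)`. The upper growth bound `ψ(2^k r) ≤ c₂ 2^(k(M+1)/2) ψ(r)`
makes that sum geometric with ratio `2^((M-1)/2) < 1`, and, applied between `|h|` and `1`,
it gives `2^(-N) < 2|h| ≤ 2 c₂ ψ(|h|) / ψ(1)`.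
-/

open Finset

/-- The second differences are centred at `x + 2 ^ k • h`, in the shape in which they are
bounded. -/
lemma first_diff_eq_dyadic_sum {G : Type*} [AddCommGroup G] (f : G → ℝ) (x h : G) (N : ℕ) :
    f (x + h) - f x = (f (x + 2 ^ N • h) - f x) / 2 ^ N
      - ∑ k ∈ range N, (f (x + 2 ^ k • h + 2 ^ k • h) - 2 * f (x + 2 ^ k • h)
          + f (x + 2 ^ k • h - 2 ^ k • h)) / 2 ^ (k + 1) := by
  induction N with
  | zero => simp
  | succ N ih =>
    have hdouble : x + 2 ^ (N + 1) • h = x + 2 ^ N • h + 2 ^ N • h := by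
      rw [pow_succ, mul_nsmul', two_nsmul, nsmul_add, add_assoc]
    rw [ih, sum_range_succ, hdouble, add_sub_cancel_right]
    ring

section NormedSpace

variable {E : Type*} [NormedAddCommGroup E] [NormedSpace ℝ E] {f : E → ℝ} {ψ : ℝ → ℝ} {A B : ℝ}

lemma norm_two_pow_nsmul (h : E) (k : ℕ) : ‖2 ^ k • h‖ = 2 ^ k * ‖h‖ := by
  rw [← Nat.cast_smul_eq_nsmul ℝ, norm_smul]
  simp

lemma abs_first_diff_le_dyadic_sum (hA : ∀ x, |f x| ≤ A)
    (hB : ∀ x h : E, 0 < ‖h‖ → ‖h‖ ≤ 1 → |f (x + h) - 2 * f x + f (x - h)| ≤ B * ψ ‖h‖)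
    (x : E) {h : E} (h0 : 0 < ‖h‖) {N : ℕ} (hN : 2 ^ N * ‖h‖ ≤ 1) :
    |f (x + h) - f x| ≤ 2 * A / 2 ^ N + B * ∑ k ∈ range N, ψ (2 ^ k * ‖h‖) / 2 ^ (k + 1) := by
  have hfirst : |(f (x + 2 ^ N • h) - f x) / 2 ^ N| ≤ 2 * A / 2 ^ N := by
    rw [abs_div, abs_pow, abs_two, two_mul]
    exact div_le_div_of_nonneg_right ((abs_sub _ _).trans (add_le_add (hA _) (hA _)))
      (by positivity)
  have hsecond : ∀ k ∈ range N, |(f (x + 2 ^ k • h + 2 ^ k • h) - 2 * f (x + 2 ^ k • h)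
      + f (x + 2 ^ k • h - 2 ^ k • h)) / 2 ^ (k + 1)| ≤ B * (ψ (2 ^ k * ‖h‖) / 2 ^ (k + 1)) := by
    intro k hk
    have hscale : 2 ^ k * ‖h‖ ≤ 1 := le_trans (mul_le_mul_of_nonneg_right
      (pow_le_pow_right₀ one_le_two (mem_range.1 hk).le) (norm_nonneg h)) hN
    rw [abs_div, abs_pow, abs_two, mul_div_assoc', ← norm_two_pow_nsmul]
    refine div_le_div_of_nonneg_right (hB _ _ ?_ ?_) (by positivity)
    · rw [norm_two_pow_nsmul]; positivity
    · rwa [norm_two_pow_nsmul]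
  rw [first_diff_eq_dyadic_sum f x h N, mul_sum]
  calc _ ≤ |(f (x + 2 ^ N • h) - f x) / 2 ^ N| + ∑ k ∈ range N, _ :=
        (abs_sub _ _).trans (add_le_add le_rfl (abs_sum_le_sum_abs _ _))
    _ ≤ _ := add_le_add hfirst (sum_le_sum hsecond)

end NormedSpace

section Growth

variable {ψ : ℝ → ℝ} {c α : ℝ}

lemma one_le_of_growth (hψpos : ∀ r, 0 < r → r ≤ 1 → 0 < ψ r)
    (hgrowth : ∀ r R, 0 < r → r ≤ R → R ≤ 1 → ψ R ≤ c * (R / r) ^ α * ψ r) : 1 ≤ c := by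
  have h := hgrowth 1 1 one_pos le_rfl le_rfl
  rw [div_one, Real.one_rpow, mul_one] at h
  exact (le_mul_iff_one_le_left (hψpos 1 one_pos le_rfl)).1 h

lemma mul_le_of_growth (hα : α ≤ 1) (hψpos : ∀ r, 0 < r → r ≤ 1 → 0 < ψ r)
    (hgrowth : ∀ r R, 0 < r → r ≤ R → R ≤ 1 → ψ R ≤ c * (R / r) ^ α * ψ r)
    {r : ℝ} (hr0 : 0 < r) (hr1 : r ≤ 1) : r * ψ 1 ≤ c * ψ r := by
  have hc : 0 ≤ c := zero_le_one.trans (one_le_of_growth hψpos hgrowth)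
  have hpow : (1 / r) ^ α ≤ 1 / r := by
    simpa using Real.rpow_le_rpow_of_exponent_le (one_le_one_div hr0 hr1) hα
  calc r * ψ 1 ≤ r * (c * (1 / r) ^ α * ψ r) := by
        gcongr; exact hgrowth r 1 hr0 hr1 le_rfl
    _ ≤ r * (c * (1 / r) * ψ r) := by
        gcongr; exact (hψpos r hr0 hr1).le
    _ = c * ψ r := by field_simp

lemma dyadic_sum_le_of_growth (hα : α < 1) (hψpos : ∀ r, 0 < r → r ≤ 1 → 0 < ψ r)
    (hgrowth : ∀ r R, 0 < r → r ≤ R → R ≤ 1 → ψ R ≤ c * (R / r) ^ α * ψ r)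
    {r : ℝ} (hr : 0 < r) {N : ℕ} (hN : 2 ^ N * r ≤ 1) :
    ∑ k ∈ range N, ψ (2 ^ k * r) / 2 ^ (k + 1) ≤ c / (2 * (1 - 2 ^ (α - 1))) * ψ r := by
  set t : ℝ := 2 ^ (α - 1)
  have ht0 : 0 < t := by positivity
  have ht1 : t < 1 := Real.rpow_lt_one_of_one_lt_of_neg one_lt_two (by linarith)
  have hr_le : ∀ k : ℕ, r ≤ 2 ^ k * r := fun k =>
    le_mul_of_one_le_left hr.le (one_le_pow₀ one_le_two)
  have hψr : 0 < ψ r := hψpos r hr ((hr_le N).trans hN)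
  have hc : 0 ≤ c := zero_le_one.trans (one_le_of_growth hψpos hgrowth)
  have hterm : ∀ k ∈ range N, ψ (2 ^ k * r) / 2 ^ (k + 1) ≤ c * ψ r / 2 * t ^ k := by
    intro k hk
    have hscale : 2 ^ k * r ≤ 1 := le_trans (mul_le_mul_of_nonneg_right
      (pow_le_pow_right₀ one_le_two (mem_range.1 hk).le) hr.le) hN
    have h := hgrowth r (2 ^ k * r) hr (hr_le k) hscale
    have hpow : ((2 : ℝ) ^ k) ^ α = t ^ k * 2 ^ k := by
      have ht2 : t * 2 = 2 ^ α := by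
        show (2 : ℝ) ^ (α - 1) * 2 = 2 ^ α
        rw [Real.rpow_sub_one two_ne_zero, div_mul_cancel₀ _ two_ne_zero]
      rw [← mul_pow, ht2, Real.rpow_pow_comm zero_le_two]
    rw [mul_div_cancel_right₀ _ hr.ne', hpow] at h
    rw [div_le_iff₀ (by positivity)]
    calc ψ (2 ^ k * r) ≤ c * (t ^ k * 2 ^ k) * ψ r := h
      _ = c * ψ r / 2 * t ^ k * 2 ^ (k + 1) := by ring
  have hgeom : ∑ k ∈ range N, t ^ k ≤ 1 / (1 - t) := by
    have h := geom_sum_Ico_le_of_lt_one (m := 0) (n := N) ht0.le ht1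
    rwa [← range_eq_Ico, pow_zero] at h
  calc ∑ k ∈ range N, ψ (2 ^ k * r) / 2 ^ (k + 1) ≤ ∑ k ∈ range N, c * ψ r / 2 * t ^ k :=
        sum_le_sum hterm
    _ = c * ψ r / 2 * ∑ k ∈ range N, t ^ k := (mul_sum _ _ _).symm
    _ ≤ c * ψ r / 2 * (1 / (1 - t)) :=
        mul_le_mul_of_nonneg_left hgeom
          (div_nonneg (mul_nonneg hc hψr.le) zero_le_two)
    _ = c / (2 * (1 - t)) * ψ r := by field_simp

lemma abs_first_diff_le_of_growth {E : Type*} [NormedAddCommGroup E] [NormedSpace ℝ E]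
    (hα : α < 1) (hψpos : ∀ r, 0 < r → r ≤ 1 → 0 < ψ r)
    (hgrowth : ∀ r R, 0 < r → r ≤ R → R ≤ 1 → ψ R ≤ c * (R / r) ^ α * ψ r)
    {f : E → ℝ} {A B : ℝ} (hA : ∀ x, |f x| ≤ A)
    (hB : ∀ x h : E, 0 < ‖h‖ → ‖h‖ ≤ 1 → |f (x + h) - 2 * f x + f (x - h)| ≤ B * ψ ‖h‖)
    (x : E) {h : E} (h0 : 0 < ‖h‖) (h1 : ‖h‖ ≤ 1) :
    |f (x + h) - f x| ≤ (4 * c / ψ 1 * A + c / (2 * (1 - 2 ^ (α - 1))) * B) * ψ ‖h‖ := by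
  obtain ⟨N, hN, hN'⟩ := exists_nat_pow_near ((one_le_inv₀ h0).2 h1) one_lt_two
  have hNle : 2 ^ N * ‖h‖ ≤ 1 := (le_inv_mul_iff₀' h0).1 (by rwa [mul_one])
  have hψh : 0 < ψ ‖h‖ := hψpos _ h0 h1
  have hA0 : 0 ≤ A := (abs_nonneg _).trans (hA x)
  have hB0 : 0 ≤ B := nonneg_of_mul_nonneg_left ((abs_nonneg _).trans (hB x h h0 h1)) hψh
  have hcoarse : 2 * A / 2 ^ N ≤ 4 * c / ψ 1 * A * ψ ‖h‖ := by
    have hN2 : 1 / 2 ^ N ≤ 2 * ‖h‖ := by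
      rw [div_le_iff₀ (by positivity)]
      have h2N := (inv_lt_iff_one_lt_mul₀ h0).1 hN'
      rw [pow_succ] at h2N
      linarith
    have hh : ‖h‖ ≤ c * ψ ‖h‖ / ψ 1 :=
      (le_div_iff₀ (hψpos 1 one_pos le_rfl)).2 (mul_le_of_growth hα.le hψpos hgrowth h0 h1)
    calc 2 * A / 2 ^ N = 2 * A * (1 / 2 ^ N) := by ring
      _ ≤ 2 * A * (2 * ‖h‖) := by gcongr
      _ ≤ 2 * A * (2 * (c * ψ ‖h‖ / ψ 1)) := by gcongr
      _ = 4 * c / ψ 1 * A * ψ ‖h‖ := by ring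
  calc |f (x + h) - f x|
      ≤ 2 * A / 2 ^ N + B * ∑ k ∈ range N, ψ (2 ^ k * ‖h‖) / 2 ^ (k + 1) :=
        abs_first_diff_le_dyadic_sum hA hB x h0 hNle
    _ ≤ 4 * c / ψ 1 * A * ψ ‖h‖ + B * (c / (2 * (1 - 2 ^ (α - 1))) * ψ ‖h‖) :=
        add_le_add hcoarse (mul_le_mul_of_nonneg_left
          (dyadic_sum_le_of_growth hα hψpos hgrowth h0 hNle) hB0)
    _ = _ := by ring

end Growth

lemma iSup_first_diff_le_of_forall {E : Type*} [NormedAddCommGroup E] {f : E → ℝ}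
    {ψ : ℝ → ℝ} {K : ℝ} (hK : 0 < K) (hψpos : ∀ r, 0 < r → r ≤ 1 → 0 < ψ r)
    (hfirst : ∀ A B : ℝ, 0 ≤ A → 0 ≤ B → (∀ x, |f x| ≤ A) →
      (∀ x h : E, 0 < ‖h‖ → ‖h‖ ≤ 1 → |f (x + h) - 2 * f x + f (x - h)| ≤ B * ψ ‖h‖) →
      ∀ x h : E, 0 < ‖h‖ → ‖h‖ ≤ 1 → |f (x + h) - f x| ≤ K * (A + B) * ψ ‖h‖) :
    (⨆ (x : E) (h : E) (_ : 0 < ‖h‖ ∧ ‖h‖ ≤ 1), ENNReal.ofReal (|f (x + h) - f x| / ψ ‖h‖))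
      ≤ ENNReal.ofReal K * ((⨆ x, ENNReal.ofReal |f x|) +
        ⨆ (x : E) (h : E) (_ : 0 < ‖h‖ ∧ ‖h‖ ≤ 1),
          ENNReal.ofReal (|f (x + h) - 2 * f x + f (x - h)| / ψ ‖h‖)) := by
  set S₀ := ⨆ x, ENNReal.ofReal |f x|
  set S₂ := ⨆ (x : E) (h : E) (_ : 0 < ‖h‖ ∧ ‖h‖ ≤ 1),
    ENNReal.ofReal (|f (x + h) - 2 * f x + f (x - h)| / ψ ‖h‖)
  rcases eq_or_ne (S₀ + S₂) ⊤ with hS | hS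
  · rw [hS, ENNReal.mul_top (ENNReal.ofReal_pos.2 hK).ne']
    exact le_top
  obtain ⟨hS₀, hS₂⟩ := ENNReal.add_ne_top.1 hS
  have hA : ∀ x, |f x| ≤ S₀.toReal := fun x =>
    (ENNReal.ofReal_le_iff_le_toReal hS₀).1 (le_iSup (fun x => ENNReal.ofReal |f x|) x)
  have hB : ∀ x h : E, 0 < ‖h‖ → ‖h‖ ≤ 1 →
      |f (x + h) - 2 * f x + f (x - h)| ≤ S₂.toReal * ψ ‖h‖ := fun x h h0 h1 =>
    (div_le_iff₀ (hψpos _ h0 h1)).1 ((ENNReal.ofReal_le_iff_le_toReal hS₂).1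
      (le_iSup₂_of_le x h (le_iSup_of_le ⟨h0, h1⟩ le_rfl)))
  refine iSup₂_le fun x h => iSup_le fun ⟨h0, h1⟩ => ?_
  rw [← ENNReal.ofReal_toReal hS, ENNReal.toReal_add hS₀ hS₂, ← ENNReal.ofReal_mul hK.le]
  exact ENNReal.ofReal_le_ofReal ((div_le_iff₀ (hψpos _ h0 h1)).2
    (hfirst _ _ ENNReal.toReal_nonneg ENNReal.toReal_nonneg hA hB x h h0 h1))

theorem first_diff_le_sup_add_second_diff_general
    (d : ℕ) (ψ : ℝ → ℝ) (c₁ c₂ m M : ℝ)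
    (hM : M < 1)
    (hψpos : ∀ r : ℝ, 0 < r → r ≤ 1 → 0 < ψ r)
    (hratio : ∀ r R : ℝ, 0 < r → r ≤ R → R ≤ 1 →
      c₁ * (R / r) ^ (m / 2) ≤ ψ R / ψ r ∧ ψ R / ψ r ≤ c₂ * (R / r) ^ ((M + 1) / 2)) :
    ∃ C : ℝ, 0 < C ∧
      ∀ f : EuclideanSpace ℝ (Fin d) → ℝ, Continuous f →
        Bornology.IsBounded (Set.range f) →
        (⨆ (x : EuclideanSpace ℝ (Fin d)) (h : EuclideanSpace ℝ (Fin d))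
            (_ : 0 < ‖h‖ ∧ ‖h‖ ≤ 1),
            ENNReal.ofReal (|f (x + h) - f x| / ψ ‖h‖))
        ≤ ENNReal.ofReal C *
          ((⨆ x : EuclideanSpace ℝ (Fin d), ENNReal.ofReal |f x|) +
           ⨆ (x : EuclideanSpace ℝ (Fin d)) (h : EuclideanSpace ℝ (Fin d))
              (_ : 0 < ‖h‖ ∧ ‖h‖ ≤ 1),
              ENNReal.ofReal (|f (x + h) - 2 * f x + f (x - h)| / ψ ‖h‖)) := by
  have hgrowth : ∀ r R, 0 < r → r ≤ R → R ≤ 1 → ψ R ≤ c₂ * (R / r) ^ ((M + 1) / 2) * ψ r :=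
    fun r R hr hrR hR => (div_le_iff₀ (hψpos r hr (hrR.trans hR))).1 (hratio r R hr hrR hR).2
  have hα : (M + 1) / 2 < 1 := by linarith
  have hc₂ : 0 < c₂ := one_pos.trans_le (one_le_of_growth hψpos hgrowth)
  have hψ1 : 0 < ψ 1 := hψpos 1 one_pos le_rfl
  have ht : 0 < 1 - (2 : ℝ) ^ ((M + 1) / 2 - 1) :=
    sub_pos.2 (Real.rpow_lt_one_of_one_lt_of_neg one_lt_two (by linarith))
  set a := 4 * c₂ / ψ 1
  set b := c₂ / (2 * (1 - (2 : ℝ) ^ ((M + 1) / 2 - 1)))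
  have ha : 0 < a := by positivity
  have hb : 0 < b := by positivity
  refine ⟨a + b, add_pos ha hb, fun f _ _ => iSup_first_diff_le_of_forall (add_pos ha hb) hψpos ?_⟩
  intro A B hA0 hB0 hA hB x h h0 h1
  calc |f (x + h) - f x| ≤ (a * A + b * B) * ψ ‖h‖ :=
        abs_first_diff_le_of_growth hα hψpos hgrowth hA hB x h0 h1
    _ ≤ (a + b) * (A + B) * ψ ‖h‖ := by
        refine mul_le_mul_of_nonneg_right ?_ (hψpos _ h0 h1).le
        nlinarith [mul_nonneg ha.le hB0, mul_nonneg hb.le hA0]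

/-- The first-difference ψ-Hölder seminorm is controlled by the sup norm plus the
second-difference ψ-Hölder seminorm, with a constant depending only on ψ. -/
theorem first_diff_le_sup_add_second_diff
    (d : ℕ) (ψ : ℝ → ℝ) (c₁ c₂ m M : ℝ)
    (hc₁ : 0 < c₁) (hc₁' : c₁ ≤ 1) (hc₂ : 1 ≤ c₂)
    (hm : 0 < m) (hmM : m < M) (hM : M < 1)
    (hψpos : ∀ r : ℝ, 0 < r → r ≤ 1 → 0 < ψ r)
    (hratio : ∀ r R : ℝ, 0 < r → r ≤ R → R ≤ 1 →
      c₁ * (R / r) ^ (m / 2) ≤ ψ R / ψ r ∧ ψ R / ψ r ≤ c₂ * (R / r) ^ ((M + 1) / 2)) :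
    ∃ C : ℝ, 0 < C ∧
      ∀ f : EuclideanSpace ℝ (Fin d) → ℝ, Continuous f →
        Bornology.IsBounded (Set.range f) →
        (⨆ (x : EuclideanSpace ℝ (Fin d)) (h : EuclideanSpace ℝ (Fin d))
            (_ : 0 < ‖h‖ ∧ ‖h‖ ≤ 1),
            ENNReal.ofReal (|f (x + h) - f x| / ψ ‖h‖))
        ≤ ENNReal.ofReal C *
          ((⨆ x : EuclideanSpace ℝ (Fin d), ENNReal.ofReal |f x|) +
           ⨆ (x : EuclideanSpace ℝ (Fin d)) (h : EuclideanSpace ℝ (Fin d))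
              (_ : 0 < ‖h‖ ∧ ‖h‖ ≤ 1),
              ENNReal.ofReal (|f (x + h) - 2 * f x + f (x - h)| / ψ ‖h‖)) :=
  first_diff_le_sup_add_second_diff_general d ψ c₁ c₂ m M hM hψpos hratio
end

section
/- Let ψ: (0,1] → (0,∞) and suppose there is c₁ ∈ (0,1] and m > 1 such that ψ(R)/ψ(r) ≥ c₁(R/r)^{(m+1)/2} for 0 < r ≤ R ≤ 1 and ψ(R)/ψ(r) ≤ c₂(R/r)^{(M+2)/2} for some M < 2 (i.e., the scaling indices of ψ lie in (1,2)). Then for every ε > 0 there exists C = C(d, ψ, ε) > 0 such that for every bounded C¹ function f: ℝᵈ → ℝ with bounded gradient, ‖Df‖_∞ ≤ C‖f‖_∞ + ε·[Df]_{C^{-1;ψ}}, where [Df]_{C^{-1;ψ}} = max_i sup_{x, 0<|h|≤1} |D_i f(x+h) − D_i f(x)| · |h| / ψ(|h|). -/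
/-!
Since `ψ` scales from below with an exponent `p > 1`, `ψ t ≤ ε t` for all small `t ≤ r`.
By the mean value theorem along `e_i`, some `θ ∈ (0, r)` has `|D_i f(x + θ e_i)| ≤ 2‖f‖_∞ / r`,
and the `C^{-1;ψ}` seminorm bounds `|D_i f(x) - D_i f(x + θ e_i)|` by `S ψ(θ) / θ ≤ ε S`.
-/

open Set

lemma le_div_mul_rpow_of_mul_rpow_le_div {a b c p t : ℝ} (hc : 0 < c) (ht : 0 < t) (hb : 0 < b)
    (h : c * (1 / t) ^ p ≤ a / b) : b ≤ a / c * t ^ p := by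
  have htp : 0 < t ^ p := Real.rpow_pos_of_pos ht p
  rw [one_div, Real.inv_rpow ht.le, le_div_iff₀ hb] at h
  rw [div_mul_eq_mul_div, le_div_iff₀ hc]
  calc b * c = c * (t ^ p)⁻¹ * b * t ^ p := by field_simp
    _ ≤ a * t ^ p := by gcongr

lemma exists_le_mul_self_of_lower_scaling {ψ : ℝ → ℝ} {c p : ℝ} (hc : 0 < c) (hp : 1 < p)
    (hψpos : ∀ t : ℝ, 0 < t → t ≤ 1 → 0 < ψ t)
    (hlow : ∀ t : ℝ, 0 < t → t ≤ 1 → c * (1 / t) ^ p ≤ ψ 1 / ψ t)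
    {ε : ℝ} (hε : 0 < ε) :
    ∃ r, 0 < r ∧ r ≤ 1 ∧ ∀ t, 0 < t → t ≤ r → ψ t ≤ ε * t := by
  have hψ1 : 0 < ψ 1 := hψpos 1 one_pos le_rfl
  set A := ε * c / ψ 1
  have hA : 0 < A := by positivity
  refine ⟨min 1 (A ^ (p - 1)⁻¹), lt_min one_pos (by positivity), min_le_left _ _, ?_⟩
  intro t ht htr
  have ht1 : t ≤ 1 := htr.trans (min_le_left _ _)
  have htA : t ^ (p - 1) ≤ A := by
    calc t ^ (p - 1) ≤ (A ^ (p - 1)⁻¹) ^ (p - 1) := by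
          gcongr
          exact htr.trans (min_le_right _ _)
      _ = A := by rw [← Real.rpow_mul hA.le, inv_mul_cancel₀ (by linarith), Real.rpow_one]
  have htp : t ^ p = t ^ (p - 1) * t := by
    rw [← Real.rpow_add_one ht.ne']; ring_nf
  calc ψ t ≤ ψ 1 / c * t ^ p :=
        le_div_mul_rpow_of_mul_rpow_le_div hc ht (hψpos t ht ht1) (hlow t ht ht1)
    _ ≤ ψ 1 / c * (A * t) := by rw [htp]; gcongr
    _ = ε * t := by simp only [A]; field_simp

lemma exists_mem_Ioo_abs_fderiv_apply_le {E : Type*} [NormedAddCommGroup E] [NormedSpace ℝ E]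
    {f : E → ℝ} (hf : Differentiable ℝ f) {B : ℝ} (hB : ∀ y, |f y| ≤ B) (x v : E)
    {r : ℝ} (hr : 0 < r) : ∃ θ ∈ Ioo 0 r, |fderiv ℝ f (x + θ • v) v| ≤ 2 / r * B := by
  set g : ℝ → ℝ := fun t => f (x + t • v)
  have hg : ∀ t, HasDerivAt g (fderiv ℝ f (x + t • v) v) t := fun t =>
    (hf _).hasFDerivAt.comp_hasDerivAt t
      (by simpa using ((hasDerivAt_id t).smul_const v).const_add x)
  obtain ⟨θ, hθ, hslope⟩ := exists_hasDerivAt_eq_slope g _ hr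
    (fun t _ => (hg t).continuousAt.continuousWithinAt) (fun t _ => hg t)
  refine ⟨θ, hθ, ?_⟩
  rw [hslope, sub_zero, abs_div, abs_of_pos hr, div_le_iff₀ hr]
  calc |g r - g 0| ≤ B + B := (abs_sub _ _).trans (add_le_add (hB _) (hB _))
    _ = 2 / r * B * r := by field_simp; ring

lemma le_mul_of_mul_div_le {a θ ψθ ε S : ℝ} (ha : 0 ≤ a) (hθ : 0 < θ) (hψθ : 0 < ψθ)
    (hψθε : ψθ ≤ ε * θ) (h : a * θ / ψθ ≤ S) : a ≤ ε * S := by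
  have hS : 0 ≤ S := le_trans (by positivity) h
  rw [div_le_iff₀ hψθ] at h
  have : a * θ ≤ ε * S * θ := by nlinarith
  exact le_of_mul_le_mul_right this hθ

theorem grad_sup_interpolation_general
    (d : ℕ) (ψ : ℝ → ℝ) (c₁ m : ℝ)
    (hc₁ : 0 < c₁)
    (hm : 1 < m)
    (hψpos : ∀ r : ℝ, 0 < r → r ≤ 1 → 0 < ψ r)
    (hlow : ∀ r R : ℝ, 0 < r → r ≤ R → R ≤ 1 → c₁ * (R / r) ^ ((m + 1) / 2) ≤ ψ R / ψ r) :
    ∀ ε : ℝ, 0 < ε → ∃ C : ℝ, 0 < C ∧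
      ∀ f : EuclideanSpace ℝ (Fin d) → ℝ, ContDiff ℝ 1 f →
      ∀ Bf G S : ℝ,
        (∀ x, |f x| ≤ Bf) →
        (∀ (x : EuclideanSpace ℝ (Fin d)) (i : Fin d),
          |fderiv ℝ f x (EuclideanSpace.single i 1)| ≤ G) →
        (∀ (i : Fin d) (x h : EuclideanSpace ℝ (Fin d)), 0 < ‖h‖ → ‖h‖ ≤ 1 →
          |fderiv ℝ f (x + h) (EuclideanSpace.single i 1) -
            fderiv ℝ f x (EuclideanSpace.single i 1)| * ‖h‖ / ψ ‖h‖ ≤ S) →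
        ∀ (x : EuclideanSpace ℝ (Fin d)) (i : Fin d),
          |fderiv ℝ f x (EuclideanSpace.single i 1)| ≤ C * Bf + ε * S := by
  intro ε hε
  obtain ⟨r, hr, hr1, hψr⟩ := exists_le_mul_self_of_lower_scaling hc₁ (by linarith : 1 < (m + 1) / 2)
    hψpos (fun t ht ht1 => hlow t 1 ht ht1 le_rfl) hε
  refine ⟨2 / r, by positivity, fun f hf Bf _ S hBf _ hS x i => ?_⟩
  set e : EuclideanSpace ℝ (Fin d) := EuclideanSpace.single i 1
  set D : EuclideanSpace ℝ (Fin d) → ℝ := fun y => fderiv ℝ f y e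
  obtain ⟨θ, ⟨hθ, hθr⟩, hmid⟩ :=
    exists_mem_Ioo_abs_fderiv_apply_le (hf.differentiable one_ne_zero) hBf x e hr
  have hθe : ‖θ • e‖ = θ := by
    rw [norm_smul, PiLp.norm_single, norm_one, mul_one, Real.norm_of_nonneg hθ.le]
  have hosc : |D x - D (x + θ • e)| ≤ ε * S := by
    have := hS i x (θ • e) (by rw [hθe]; exact hθ) (by rw [hθe]; linarith)
    rw [hθe, abs_sub_comm] at this
    exact le_mul_of_mul_div_le (abs_nonneg _) hθ (hψpos θ hθ (by linarith))
      (hψr θ hθ hθr.le) this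
  calc |D x| = |(D x - D (x + θ • e)) + D (x + θ • e)| := by rw [sub_add_cancel]
    _ ≤ |D x - D (x + θ • e)| + |D (x + θ • e)| := abs_add_le _ _
    _ ≤ ε * S + 2 / r * Bf := add_le_add hosc hmid
    _ = 2 / r * Bf + ε * S := add_comm _ _

/-- Interpolation: when the scaling indices of ψ lie in (1,2), the sup norm of the
gradient is bounded by C‖f‖_∞ + ε [Df]_{C^{-1;ψ}}. -/
theorem grad_sup_interpolation
    (d : ℕ) (ψ : ℝ → ℝ) (c₁ c₂ m M : ℝ)
    (hc₁ : 0 < c₁) (hc₁' : c₁ ≤ 1) (hc₂ : 0 < c₂)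
    (hm : 1 < m) (hmM : m ≤ M) (hM : M < 2)
    (hψpos : ∀ r : ℝ, 0 < r → r ≤ 1 → 0 < ψ r)
    (hlow : ∀ r R : ℝ, 0 < r → r ≤ R → R ≤ 1 → c₁ * (R / r) ^ ((m + 1) / 2) ≤ ψ R / ψ r)
    (hup : ∀ r R : ℝ, 0 < r → r ≤ R → R ≤ 1 → ψ R / ψ r ≤ c₂ * (R / r) ^ ((M + 2) / 2)) :
    ∀ ε : ℝ, 0 < ε → ∃ C : ℝ, 0 < C ∧
      ∀ f : EuclideanSpace ℝ (Fin d) → ℝ, ContDiff ℝ 1 f →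
      ∀ Bf G S : ℝ,
        (∀ x, |f x| ≤ Bf) →
        (∀ (x : EuclideanSpace ℝ (Fin d)) (i : Fin d),
          |fderiv ℝ f x (EuclideanSpace.single i 1)| ≤ G) →
        (∀ (i : Fin d) (x h : EuclideanSpace ℝ (Fin d)), 0 < ‖h‖ → ‖h‖ ≤ 1 →
          |fderiv ℝ f (x + h) (EuclideanSpace.single i 1) -
            fderiv ℝ f x (EuclideanSpace.single i 1)| * ‖h‖ / ψ ‖h‖ ≤ S) →
        ∀ (x : EuclideanSpace ℝ (Fin d)) (i : Fin d),
          |fderiv ℝ f x (EuclideanSpace.single i 1)| ≤ C * Bf + ε * S :=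
  grad_sup_interpolation_general d ψ c₁ m hc₁ hm hψpos hlow
end

section
/- Let ψ₁, ψ₂: (0,1] → (0,∞) satisfy: there exist 0 < M₁ < m₂ < 1 and constants c₁, c₂ > 0 such that ψ₁(t) ≥ c₁ t^{(2M₁+m₂)/3} and ψ₂(t) ≤ c₂ t^{(M₁+2m₂)/3} for t ∈ (0,1]. Then for every ε ∈ (0,1) there exists C > 0 such that for all bounded continuous f: ℝᵈ → ℝ, sup_{x, 0<|h|≤1} |f(x+h)−f(x)|/ψ₁(|h|) ≤ C‖f‖_∞ + ε·sup_{x, 0<|h|≤1} |f(x+h)−f(x)|/ψ₂(|h|). -/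
/-! Split the increments `f (x + h) - f x` at a scale `δ`. For `|h| ≥ δ` the weight `ψ₁ |h|` is
bounded below by `c₁ δ^α`, so the quotient is controlled by `2 ‖f‖_∞ / (c₁ δ^α)`. For `|h| < δ` the
gap `γ` between the two exponents gives `ψ₂ |h| ≤ c₂ |h|^γ |h|^α ≤ ε ψ₁ |h|` once `c₂ δ^γ = ε c₁`,
so the quotient is controlled by `ε [f]_{ψ₂}`. -/

open ENNReal

section HolderSeminorm

variable {E : Type*} [Add E] [Norm E]

noncomputable def holderSeminorm (ψ : ℝ → ℝ) (f : E → ℝ) : ℝ≥0∞ :=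
  ⨆ (x : E) (h : E) (_ : 0 < ‖h‖ ∧ ‖h‖ ≤ 1), ENNReal.ofReal (|f (x + h) - f x| / ψ ‖h‖)

theorem holderSeminorm_le_of_forall_le_or_le_mul {ψ₁ ψ₂ : ℝ → ℝ} {a ε : ℝ} (ha : 0 < a)
    (hε : 0 ≤ ε) (hψ₂pos : ∀ t : ℝ, 0 < t → t ≤ 1 → 0 < ψ₂ t)
    (hψ : ∀ t : ℝ, 0 < t → t ≤ 1 → a ≤ ψ₁ t ∨ ψ₂ t ≤ ε * ψ₁ t) (f : E → ℝ) :
    holderSeminorm ψ₁ f ≤ ENNReal.ofReal (2 / a) * (⨆ x, ENNReal.ofReal |f x|) +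
      ENNReal.ofReal ε * holderSeminorm ψ₂ f := by
  refine iSup_le fun x => iSup_le fun h => iSup_le fun ⟨ht0, ht1⟩ => ?_
  set S := ⨆ y, ENNReal.ofReal |f y|
  have hS : ∀ y, ENNReal.ofReal |f y| ≤ S := le_iSup (fun y => ENNReal.ofReal |f y|)
  rcases hψ ‖h‖ ht0 ht1 with hlarge | hsmall
  · have hreal : |f (x + h) - f x| / ψ₁ ‖h‖ ≤ (2 / a) / 2 * (|f (x + h)| + |f x|) := by
      calc |f (x + h) - f x| / ψ₁ ‖h‖ ≤ (|f (x + h)| + |f x|) / a :=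
            div_le_div₀ (by positivity) (abs_sub _ _) ha hlarge
        _ = (2 / a) / 2 * (|f (x + h)| + |f x|) := by ring
    calc ENNReal.ofReal (|f (x + h) - f x| / ψ₁ ‖h‖)
        ≤ ENNReal.ofReal ((2 / a) / 2) * (ENNReal.ofReal |f (x + h)| + ENNReal.ofReal |f x|) := by
          rw [← ENNReal.ofReal_add (abs_nonneg _) (abs_nonneg _), ← ENNReal.ofReal_mul (by positivity)]
          exact ENNReal.ofReal_le_ofReal hreal
      _ ≤ ENNReal.ofReal ((2 / a) / 2) * (S + S) := by gcongr <;> apply hS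
      _ = ENNReal.ofReal (2 / a) * S := by
          rw [← two_mul, ← mul_assoc, ← ENNReal.ofReal_ofNat 2, ← ENNReal.ofReal_mul (by positivity)]
          ring_nf
      _ ≤ _ := le_self_add
  · have hψ₂ := hψ₂pos ‖h‖ ht0 ht1
    have hψ₁ : 0 < ψ₁ ‖h‖ := pos_of_mul_pos_right (hψ₂.trans_le hsmall) hε
    have hreal : |f (x + h) - f x| / ψ₁ ‖h‖ ≤ ε * (|f (x + h) - f x| / ψ₂ ‖h‖) := by
      rw [mul_div_assoc', div_le_div_iff₀ hψ₁ hψ₂]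
      nlinarith [mul_le_mul_of_nonneg_left hsmall (abs_nonneg (f (x + h) - f x))]
    calc ENNReal.ofReal (|f (x + h) - f x| / ψ₁ ‖h‖)
        ≤ ENNReal.ofReal ε * ENNReal.ofReal (|f (x + h) - f x| / ψ₂ ‖h‖) := by
          rw [← ENNReal.ofReal_mul hε]
          exact ENNReal.ofReal_le_ofReal hreal
      _ ≤ ENNReal.ofReal ε * holderSeminorm ψ₂ f := by
          gcongr
          exact le_iSup_of_le x (le_iSup_of_le h (le_iSup_of_le ⟨ht0, ht1⟩ le_rfl))
      _ ≤ _ := le_add_self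

end HolderSeminorm

theorem exists_pos_forall_le_or_le_mul {ψ₁ ψ₂ : ℝ → ℝ} {α γ c₁ c₂ ε : ℝ} (hα : 0 ≤ α)
    (hγ : 0 < γ) (hc₁ : 0 < c₁) (hc₂ : 0 < c₂) (hε : 0 < ε)
    (hψ₁ : ∀ t : ℝ, 0 < t → t ≤ 1 → c₁ * t ^ α ≤ ψ₁ t)
    (hψ₂ : ∀ t : ℝ, 0 < t → t ≤ 1 → ψ₂ t ≤ c₂ * t ^ (α + γ)) :
    ∃ a > 0, ∀ t : ℝ, 0 < t → t ≤ 1 → a ≤ ψ₁ t ∨ ψ₂ t ≤ ε * ψ₁ t := by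
  set δ := (ε * c₁ / c₂) ^ γ⁻¹
  have hδ : 0 < δ := by positivity
  have hδγ : δ ^ γ = ε * c₁ / c₂ := Real.rpow_inv_rpow (by positivity) hγ.ne'
  refine ⟨c₁ * δ ^ α, by positivity, fun t ht0 ht1 => ?_⟩
  rcases le_or_gt δ t with hδt | htδ
  · left
    calc c₁ * δ ^ α ≤ c₁ * t ^ α := by gcongr
      _ ≤ ψ₁ t := hψ₁ t ht0 ht1
  · right
    have htγ : c₂ * t ^ γ ≤ ε * c₁ := by
      calc c₂ * t ^ γ ≤ c₂ * δ ^ γ := by gcongr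
        _ = ε * c₁ := by rw [hδγ]; field_simp
    calc ψ₂ t ≤ c₂ * t ^ (α + γ) := hψ₂ t ht0 ht1
      _ = c₂ * t ^ γ * t ^ α := by rw [Real.rpow_add ht0]; ring
      _ ≤ ε * c₁ * t ^ α := by gcongr
      _ ≤ ε * ψ₁ t := by rw [mul_assoc]; gcongr; exact hψ₁ t ht0 ht1

theorem holder_seminorm_interpolation_general
    (d : ℕ) (ψ₁ ψ₂ : ℝ → ℝ) (M₁ m₂ c₁ c₂ : ℝ)
    (hM₁ : 0 < M₁) (hMm : M₁ < m₂)
    (hc₁ : 0 < c₁) (hc₂ : 0 < c₂)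
    (hψ₂pos : ∀ t : ℝ, 0 < t → t ≤ 1 → 0 < ψ₂ t)
    (hψ₁ : ∀ t : ℝ, 0 < t → t ≤ 1 → c₁ * t ^ ((2 * M₁ + m₂) / 3) ≤ ψ₁ t)
    (hψ₂ : ∀ t : ℝ, 0 < t → t ≤ 1 → ψ₂ t ≤ c₂ * t ^ ((M₁ + 2 * m₂) / 3)) :
    ∀ ε : ℝ, 0 < ε → ε < 1 → ∃ C : ℝ, 0 < C ∧
      ∀ f : EuclideanSpace ℝ (Fin d) → ℝ, Continuous f →
        Bornology.IsBounded (Set.range f) →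
        (⨆ (x : EuclideanSpace ℝ (Fin d)) (h : EuclideanSpace ℝ (Fin d))
            (_ : 0 < ‖h‖ ∧ ‖h‖ ≤ 1), ENNReal.ofReal (|f (x + h) - f x| / ψ₁ ‖h‖))
        ≤ ENNReal.ofReal C * (⨆ x : EuclideanSpace ℝ (Fin d), ENNReal.ofReal |f x|) +
          ENNReal.ofReal ε *
          ⨆ (x : EuclideanSpace ℝ (Fin d)) (h : EuclideanSpace ℝ (Fin d))
            (_ : 0 < ‖h‖ ∧ ‖h‖ ≤ 1), ENNReal.ofReal (|f (x + h) - f x| / ψ₂ ‖h‖) := by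
  intro ε hε _
  have hψ₂' : ∀ t : ℝ, 0 < t → t ≤ 1 →
      ψ₂ t ≤ c₂ * t ^ ((2 * M₁ + m₂) / 3 + (m₂ - M₁) / 3) := fun t ht0 ht1 => by
    convert hψ₂ t ht0 ht1 using 3; ring
  obtain ⟨a, ha, hψ⟩ := exists_pos_forall_le_or_le_mul (by linarith) (by linarith) hc₁ hc₂ hε
    hψ₁ hψ₂'
  exact ⟨2 / a, by positivity, fun f _ _ =>
    holderSeminorm_le_of_forall_le_or_le_mul ha hε.le hψ₂pos hψ f⟩

/-- Interpolation inequality between generalized Hölder seminorms: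
if the upper index of ψ₁ is below the lower index of ψ₂ (both in (0,1)),
then [f]_{ψ₁} ≤ C‖f‖_∞ + ε[f]_{ψ₂}. -/
theorem holder_seminorm_interpolation
    (d : ℕ) (ψ₁ ψ₂ : ℝ → ℝ) (M₁ m₂ c₁ c₂ : ℝ)
    (hM₁ : 0 < M₁) (hMm : M₁ < m₂) (hm₂ : m₂ < 1)
    (hc₁ : 0 < c₁) (hc₂ : 0 < c₂)
    (hψ₁pos : ∀ t : ℝ, 0 < t → t ≤ 1 → 0 < ψ₁ t)
    (hψ₂pos : ∀ t : ℝ, 0 < t → t ≤ 1 → 0 < ψ₂ t)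
    (hψ₁ : ∀ t : ℝ, 0 < t → t ≤ 1 → c₁ * t ^ ((2 * M₁ + m₂) / 3) ≤ ψ₁ t)
    (hψ₂ : ∀ t : ℝ, 0 < t → t ≤ 1 → ψ₂ t ≤ c₂ * t ^ ((M₁ + 2 * m₂) / 3)) :
    ∀ ε : ℝ, 0 < ε → ε < 1 → ∃ C : ℝ, 0 < C ∧
      ∀ f : EuclideanSpace ℝ (Fin d) → ℝ, Continuous f →
        Bornology.IsBounded (Set.range f) →
        (⨆ (x : EuclideanSpace ℝ (Fin d)) (h : EuclideanSpace ℝ (Fin d))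
            (_ : 0 < ‖h‖ ∧ ‖h‖ ≤ 1), ENNReal.ofReal (|f (x + h) - f x| / ψ₁ ‖h‖))
        ≤ ENNReal.ofReal C * (⨆ x : EuclideanSpace ℝ (Fin d), ENNReal.ofReal |f x|) +
          ENNReal.ofReal ε *
          ⨆ (x : EuclideanSpace ℝ (Fin d)) (h : EuclideanSpace ℝ (Fin d))
            (_ : 0 < ‖h‖ ∧ ‖h‖ ≤ 1), ENNReal.ofReal (|f (x + h) - f x| / ψ₂ ‖h‖) :=
  holder_seminorm_interpolation_general d ψ₁ ψ₂ M₁ m₂ c₁ c₂ hM₁ hMm hc₁ hc₂ hψ₂pos hψ₁ hψ₂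
end

section
/- Let φ, Ψ: (0,1] → (0,∞) with scaling: there exist exponents M_φ < m_Ψ and constants such that φ(t)/φ(s) ≤ c(t/s)^{M_φ+σ} and Ψ(t)/Ψ(s) ≥ c'(t/s)^{m_Ψ−σ} for 0 < s ≤ t ≤ 1 and small σ with M_φ + σ < m_Ψ − σ, and additionally ∫_{|h|>r} dh/(|h|^d φ(|h|)) ≤ C'/φ(r) (where φ is extended to (0,∞)). Then there exists C > 0 such that for all 0 < r ≤ 1, ∫_{ℝᵈ} Ψ(min(|h|, r))/(|h|^d φ(|h|)) dh ≤ C Ψ(r)/φ(r). -/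
open MeasureTheory ENNReal

/-!
Split `ℝᵈ` into the far region `{|h| > r}`, the shells `r ρ^(k+1) < |h| ≤ r ρ^k` (`ρ = 1/2`)
and the origin, where the integrand is the junk value `Ψ 0 / 0 = 0`. On the far region
`Ψ (min |h| r) = Ψ r` and the tail bound applies directly. On the `k`-th shell the lower scaling
of `Ψ` gives `Ψ |h| ≲ ρ^(k (m_Ψ - σ)) Ψ r`, while the tail bound from radius `r ρ^(k+1)` together
with the upper scaling of `φ` gives `∫_{|h| > r ρ^(k+1)} ≲ ρ^(-k (M_φ + σ)) / φ r`. Since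
`M_φ + σ < m_Ψ - σ`, the shell contributions form a convergent geometric series.
-/

lemma rpow_le_max_one_mul_pow {ρ x α : ℝ} {k : ℕ} (hρ : 0 < ρ) (hlo : ρ ^ (k + 1) < x)
    (hhi : x ≤ ρ ^ k) : x ^ α ≤ max 1 (ρ ^ α) * (ρ ^ α) ^ k := by
  have hx : 0 < x := (pow_pos hρ _).trans hlo
  rcases le_or_gt 0 α with hα | hα
  · calc x ^ α ≤ (ρ ^ k) ^ α := Real.rpow_le_rpow hx.le hhi hα
      _ = (ρ ^ α) ^ k := (Real.rpow_pow_comm hρ.le α k).symm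
      _ ≤ max 1 (ρ ^ α) * (ρ ^ α) ^ k := le_mul_of_one_le_left (by positivity) (le_max_left _ _)
  · calc x ^ α ≤ (ρ ^ (k + 1)) ^ α := Real.rpow_le_rpow_of_nonpos (pow_pos hρ _) hlo.le hα.le
      _ = ρ ^ α * (ρ ^ α) ^ k := by rw [← Real.rpow_pow_comm hρ.le, pow_succ']
      _ ≤ max 1 (ρ ^ α) * (ρ ^ α) ^ k := by gcongr; exact le_max_right _ _

lemma le_mul_of_lower_scaling {Ψ : ℝ → ℝ} {c' α r x : ℝ} (hc' : 0 < c')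
    (hΨpos : ∀ t : ℝ, 0 < t → t ≤ 1 → 0 < Ψ t)
    (hΨlow : ∀ s t : ℝ, 0 < s → s ≤ t → t ≤ 1 → c' * (t / s) ^ α ≤ Ψ t / Ψ s)
    (hx : 0 < x) (hxr : x ≤ r) (hr : r ≤ 1) :
    Ψ x ≤ (x / r) ^ α / c' * Ψ r := by
  have hr0 : 0 < r := hx.trans_le hxr
  have hpow : 0 < (x / r) ^ α := by positivity
  have h := hΨlow x r hx hxr hr
  rw [le_div_iff₀ (hΨpos x hx (hxr.trans hr)), ← inv_div, Real.inv_rpow (by positivity)] at h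
  rw [div_mul_eq_mul_div, le_div_iff₀ hc']
  calc Ψ x * c' = (x / r) ^ α * (c' * ((x / r) ^ α)⁻¹ * Ψ x) := by field_simp
    _ ≤ (x / r) ^ α * Ψ r := by gcongr

lemma le_mul_pow_of_lower_scaling {Ψ : ℝ → ℝ} {c' α ρ r x : ℝ} {k : ℕ} (hc' : 0 < c')
    (hΨpos : ∀ t : ℝ, 0 < t → t ≤ 1 → 0 < Ψ t)
    (hΨlow : ∀ s t : ℝ, 0 < s → s ≤ t → t ≤ 1 → c' * (t / s) ^ α ≤ Ψ t / Ψ s)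
    (hρ0 : 0 < ρ) (hρ1 : ρ ≤ 1) (hr : 0 < r) (hr1 : r ≤ 1)
    (hlo : r * ρ ^ (k + 1) < x) (hhi : x ≤ r * ρ ^ k) :
    Ψ x ≤ max 1 (ρ ^ α) / c' * (ρ ^ α) ^ k * Ψ r := by
  have hx : 0 < x := lt_trans (by positivity) hlo
  have hxr : x ≤ r := hhi.trans (mul_le_of_le_one_right hr.le (pow_le_one₀ hρ0.le hρ1))
  have hshell : (x / r) ^ α ≤ max 1 (ρ ^ α) * (ρ ^ α) ^ k :=
    rpow_le_max_one_mul_pow hρ0 (by rwa [lt_div_iff₀' hr]) (by rwa [div_le_iff₀' hr])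
  calc Ψ x ≤ (x / r) ^ α / c' * Ψ r := le_mul_of_lower_scaling hc' hΨpos hΨlow hx hxr hr1
    _ ≤ max 1 (ρ ^ α) * (ρ ^ α) ^ k / c' * Ψ r := by gcongr; exact (hΨpos r hr hr1).le
    _ = max 1 (ρ ^ α) / c' * (ρ ^ α) ^ k * Ψ r := by ring

lemma one_div_le_of_upper_scaling {φ : ℝ → ℝ} {c β ρ r : ℝ} (k : ℕ)
    (hφpos : ∀ t : ℝ, 0 < t → 0 < φ t)
    (hφup : ∀ s t : ℝ, 0 < s → s ≤ t → t ≤ 1 → φ t / φ s ≤ c * (t / s) ^ β)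
    (hρ0 : 0 < ρ) (hρ1 : ρ ≤ 1) (hr : 0 < r) (hr1 : r ≤ 1) :
    1 / φ (r * ρ ^ k) ≤ c * (ρ ^ β)⁻¹ ^ k / φ r := by
  have hs : 0 < r * ρ ^ k := by positivity
  have h := hφup _ r hs (mul_le_of_le_one_right hr.le (pow_le_one₀ hρ0.le hρ1)) hr1
  have hratio : r / (r * ρ ^ k) = ρ⁻¹ ^ k := by rw [div_mul_cancel_left₀ hr.ne', inv_pow]
  rw [hratio, ← Real.rpow_pow_comm (by positivity), Real.inv_rpow hρ0.le,
    div_le_iff₀ (hφpos _ hs)] at h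
  rw [div_le_div_iff₀ (hφpos _ hs) (hφpos r hr), one_mul]
  linarith

lemma ofReal_mul_ofReal_div_le_of_upper_scaling {φ : ℝ → ℝ} {a C' c β ρ r : ℝ} (k : ℕ)
    (hφpos : ∀ t : ℝ, 0 < t → 0 < φ t)
    (hφup : ∀ s t : ℝ, 0 < s → s ≤ t → t ≤ 1 → φ t / φ s ≤ c * (t / s) ^ β)
    (hρ0 : 0 < ρ) (hρ1 : ρ ≤ 1) (hr : 0 < r) (hr1 : r ≤ 1) (ha : 0 ≤ a) (hC' : 0 ≤ C') :
    ENNReal.ofReal a * ENNReal.ofReal (C' / φ (r * ρ ^ k))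
      ≤ ENNReal.ofReal (a * C' * c * (ρ ^ β)⁻¹ ^ k / φ r) := by
  rw [← ENNReal.ofReal_mul ha]
  refine ENNReal.ofReal_le_ofReal ?_
  calc a * (C' / φ (r * ρ ^ k)) = a * C' * (1 / φ (r * ρ ^ k)) := by ring
    _ ≤ a * C' * (c * (ρ ^ β)⁻¹ ^ k / φ r) := mul_le_mul_of_nonneg_left
          (one_div_le_of_upper_scaling k hφpos hφup hρ0 hρ1 hr hr1) (by positivity)
    _ = a * C' * c * (ρ ^ β)⁻¹ ^ k / φ r := by ring

lemma tsum_ofReal_mul_pow {a q : ℝ} (ha : 0 ≤ a) (hq0 : 0 ≤ q) (hq1 : q < 1) :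
    ∑' k : ℕ, ENNReal.ofReal (a * q ^ k) = ENNReal.ofReal (a / (1 - q)) := by
  rw [← ENNReal.ofReal_tsum_of_nonneg (fun k => by positivity)
    ((summable_geometric_of_lt_one hq0 hq1).mul_left a), tsum_mul_left,
    tsum_geometric_of_lt_one hq0 hq1, div_eq_mul_inv]

lemma ofReal_div_le_ofReal_mul_one_div {a b x : ℝ} (hab : a ≤ b) (hb : 0 ≤ b) (hx : 0 ≤ x) :
    ENNReal.ofReal (a / x) ≤ ENNReal.ofReal b * ENNReal.ofReal (1 / x) := by
  rw [← ENNReal.ofReal_mul hb, mul_one_div]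
  exact ENNReal.ofReal_le_ofReal (div_le_div_of_nonneg_right hab hx)

lemma lintegral_le_of_dyadic_shells {E : Type*} [NormedAddCommGroup E] [MeasurableSpace E]
    [OpensMeasurableSpace E] (μ : Measure E) {f g : E → ℝ≥0∞} {r ρ : ℝ} (hr : 0 < r)
    (hρ0 : 0 < ρ) (hρ1 : ρ < 1) {a : ℝ≥0∞} {b : ℕ → ℝ≥0∞} (ha : a ≠ ∞) (hb : ∀ k, b k ≠ ∞)
    (hf0 : f 0 = 0) (hfar : ∀ h, r < ‖h‖ → f h ≤ a * g h)
    (hnear : ∀ k h, r * ρ ^ (k + 1) < ‖h‖ → ‖h‖ ≤ r * ρ ^ k → f h ≤ b k * g h) :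
    ∫⁻ h, f h ∂μ ≤ a * ∫⁻ h in {h | r < ‖h‖}, g h ∂μ
      + ∑' k, b k * ∫⁻ h in {h | r * ρ ^ (k + 1) < ‖h‖}, g h ∂μ := by
  set shell : ℕ → Set E := fun k => {h | r * ρ ^ (k + 1) < ‖h‖ ∧ ‖h‖ ≤ r * ρ ^ k}
  have hcover : Set.univ ⊆ {h | r < ‖h‖} ∪ ({0} ∪ ⋃ k, shell k) := by
    intro h _
    rcases lt_or_ge r ‖h‖ with hfar | hle
    · exact Or.inl hfar
    rcases eq_or_ne h 0 with rfl | hne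
    · exact Or.inr (Or.inl rfl)
    obtain ⟨k, hlo, hhi⟩ := exists_nat_pow_near_of_lt_one (div_pos (norm_pos_iff.2 hne) hr)
      ((div_le_one hr).2 hle) hρ0 hρ1
    rw [lt_div_iff₀' hr] at hlo
    rw [div_le_iff₀' hr] at hhi
    exact Or.inr (Or.inr (Set.mem_iUnion.2 ⟨k, hlo, hhi⟩))
  have hfar_int : ∫⁻ h in {h | r < ‖h‖}, f h ∂μ ≤ a * ∫⁻ h in {h | r < ‖h‖}, g h ∂μ :=
    calc ∫⁻ h in {h | r < ‖h‖}, f h ∂μ ≤ ∫⁻ h in {h | r < ‖h‖}, a * g h ∂μ :=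
          setLIntegral_mono' (measurableSet_lt measurable_const measurable_norm) hfar
      _ = a * ∫⁻ h in {h | r < ‖h‖}, g h ∂μ := lintegral_const_mul' _ _ ha
  have hshell_int : ∀ k, ∫⁻ h in shell k, f h ∂μ
      ≤ b k * ∫⁻ h in {h | r * ρ ^ (k + 1) < ‖h‖}, g h ∂μ := fun k =>
    calc ∫⁻ h in shell k, f h ∂μ ≤ ∫⁻ h in shell k, b k * g h ∂μ :=
          setLIntegral_mono' ((measurableSet_lt measurable_const measurable_norm).inter
            (measurableSet_le measurable_norm measurable_const)) fun h hh => hnear k h hh.1 hh.2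
      _ = b k * ∫⁻ h in shell k, g h ∂μ := lintegral_const_mul' _ _ (hb k)
      _ ≤ b k * ∫⁻ h in {h | r * ρ ^ (k + 1) < ‖h‖}, g h ∂μ :=
          mul_le_mul_right (lintegral_mono_set fun h hh => hh.1) _
  calc ∫⁻ h, f h ∂μ ≤ ∫⁻ h in {h | r < ‖h‖} ∪ ({0} ∪ ⋃ k, shell k), f h ∂μ := by
        rw [← setLIntegral_univ]; exact lintegral_mono_set hcover
    _ ≤ ∫⁻ h in {h | r < ‖h‖}, f h ∂μ
          + (∫⁻ h in {0}, f h ∂μ + ∑' k, ∫⁻ h in shell k, f h ∂μ) :=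
        (lintegral_union_le _ _ _).trans (add_le_add_right ((lintegral_union_le _ _ _).trans
          (add_le_add_right (lintegral_iUnion_le _ _) _)) _)
    _ ≤ a * ∫⁻ h in {h | r < ‖h‖}, g h ∂μ
          + ∑' k, b k * ∫⁻ h in {h | r * ρ ^ (k + 1) < ‖h‖}, g h ∂μ := by
        rw [lintegral_singleton, hf0, zero_mul, zero_add]
        exact add_le_add hfar_int (ENNReal.tsum_le_tsum hshell_int)

lemma lintegral_le_tsum_shells_of_lower_scaling {E : Type*} [NormedAddCommGroup E]
    [MeasurableSpace E] [OpensMeasurableSpace E] (μ : Measure E) {d : ℕ} (hd : d ≠ 0) {φ Ψ : ℝ → ℝ}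
    {c' α ρ r : ℝ} (hc' : 0 < c') (hφpos : ∀ t : ℝ, 0 < t → 0 < φ t)
    (hΨpos : ∀ t : ℝ, 0 < t → t ≤ 1 → 0 < Ψ t)
    (hΨlow : ∀ s t : ℝ, 0 < s → s ≤ t → t ≤ 1 → c' * (t / s) ^ α ≤ Ψ t / Ψ s)
    (hρ0 : 0 < ρ) (hρ1 : ρ < 1) (hr : 0 < r) (hr1 : r ≤ 1) :
    ∫⁻ h, ENNReal.ofReal (Ψ (min ‖h‖ r) / (‖h‖ ^ d * φ ‖h‖)) ∂μ
      ≤ ENNReal.ofReal (Ψ r) * ∫⁻ h in {h | r < ‖h‖}, ENNReal.ofReal (1 / (‖h‖ ^ d * φ ‖h‖)) ∂μ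
        + ∑' k, ENNReal.ofReal (max 1 (ρ ^ α) / c' * (ρ ^ α) ^ k * Ψ r)
          * ∫⁻ h in {h | r * ρ ^ (k + 1) < ‖h‖}, ENNReal.ofReal (1 / (‖h‖ ^ d * φ ‖h‖)) ∂μ := by
  refine lintegral_le_of_dyadic_shells μ hr hρ0 hρ1 ofReal_ne_top (fun _ => ofReal_ne_top)
    (by simp [zero_pow hd]) (fun h hfar => ?_) (fun k h hlo hhi => ?_)
  · have hφh := hφpos _ (hr.trans hfar)
    rw [min_eq_right hfar.le]
    exact ofReal_div_le_ofReal_mul_one_div le_rfl (hΨpos r hr hr1).le (by positivity)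
  · have hφh := hφpos _ (lt_trans (by positivity) hlo)
    rw [min_eq_left (hhi.trans (mul_le_of_le_one_right hr.le (pow_le_one₀ hρ0.le hρ1.le)))]
    exact ofReal_div_le_ofReal_mul_one_div (le_mul_pow_of_lower_scaling hc' hΨpos hΨlow hρ0
      hρ1.le hr hr1 hlo hhi) (by have := hΨpos r hr hr1; positivity) (by positivity)

theorem aux_integral_inequality_general
    (d : ℕ) (hd : 1 ≤ d) (φ Ψ : ℝ → ℝ) (Mφ mΨ σ c c' C' : ℝ)
    (hMm : Mφ + σ < mΨ - σ) (hc : 0 < c) (hc' : 0 < c') (hC' : 0 < C')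
    (hφpos : ∀ t : ℝ, 0 < t → 0 < φ t)
    (hΨpos : ∀ t : ℝ, 0 < t → t ≤ 1 → 0 < Ψ t)
    (hφup : ∀ s t : ℝ, 0 < s → s ≤ t → t ≤ 1 → φ t / φ s ≤ c * (t / s) ^ (Mφ + σ))
    (hΨlow : ∀ s t : ℝ, 0 < s → s ≤ t → t ≤ 1 → c' * (t / s) ^ (mΨ - σ) ≤ Ψ t / Ψ s)
    (htail : ∀ r : ℝ, 0 < r →
      ∫⁻ h in {h : EuclideanSpace ℝ (Fin d) | r < ‖h‖},
        ENNReal.ofReal (1 / (‖h‖ ^ d * φ ‖h‖)) ≤ ENNReal.ofReal (C' / φ r)) :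
    ∃ C : ℝ, 0 < C ∧ ∀ r : ℝ, 0 < r → r ≤ 1 →
      ∫⁻ h : EuclideanSpace ℝ (Fin d),
        ENNReal.ofReal (Ψ (min ‖h‖ r) / (‖h‖ ^ d * φ ‖h‖))
        ≤ ENNReal.ofReal (C * Ψ r / φ r) := by
  set ρ : ℝ := 1 / 2
  have hρ0 : 0 < ρ := by norm_num
  have hρ1 : ρ < 1 := by norm_num
  set q := ρ ^ (mΨ - σ) / ρ ^ (Mφ + σ)
  have hq1 : q < 1 := (div_lt_one (by positivity)).2 (Real.rpow_lt_rpow_of_exponent_gt hρ0 hρ1 hMm)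
  set G := max 1 (ρ ^ (mΨ - σ)) / c' * C' * c * (ρ ^ (Mφ + σ))⁻¹
  refine ⟨C' + G / (1 - q), add_pos hC' (div_pos (by positivity) (by linarith)), ?_⟩
  intro r hr hr1
  have hΨr := hΨpos r hr hr1
  calc _ ≤ ENNReal.ofReal (Ψ r) * ENNReal.ofReal (C' / φ r)
        + ∑' k, ENNReal.ofReal (G * (Ψ r / φ r) * q ^ k) := by
        refine (lintegral_le_tsum_shells_of_lower_scaling volume (by omega) hc' hφpos hΨpos hΨlow
          hρ0 hρ1 hr hr1).trans (add_le_add (mul_le_mul_right (htail r hr) _)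
          (ENNReal.tsum_le_tsum fun k => ?_))
        calc _ ≤ _ := mul_le_mul_right (htail _ (by positivity)) _
          _ ≤ _ := ofReal_mul_ofReal_div_le_of_upper_scaling (k + 1) hφpos hφup hρ0 hρ1.le hr hr1
              (by positivity) hC'.le
          _ = ENNReal.ofReal (G * (Ψ r / φ r) * q ^ k) := by congr 1; simp only [G, q]; ring
    _ = ENNReal.ofReal ((C' + G / (1 - q)) * Ψ r / φ r) := by
        have hφr := hφpos r hr
        rw [tsum_ofReal_mul_pow (by positivity) (by positivity) hq1, ← ENNReal.ofReal_mul hΨr.le,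
          ← ENNReal.ofReal_add (by positivity) (div_nonneg (by positivity) (by linarith))]
        congr 1
        ring

/-- Auxiliary integral inequality (Lemma 4.3):
∫ Ψ(|h|∧r)/(|h|^d φ(|h|)) dh ≤ C Ψ(r)/φ(r). -/
theorem aux_integral_inequality
    (d : ℕ) (hd : 1 ≤ d) (φ Ψ : ℝ → ℝ) (Mφ mΨ σ c c' C' : ℝ)
    (hσ : 0 < σ) (hMm : Mφ + σ < mΨ - σ) (hc : 0 < c) (hc' : 0 < c') (hC' : 0 < C')
    (hφpos : ∀ t : ℝ, 0 < t → 0 < φ t)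
    (hΨpos : ∀ t : ℝ, 0 < t → t ≤ 1 → 0 < Ψ t)
    (hφup : ∀ s t : ℝ, 0 < s → s ≤ t → t ≤ 1 → φ t / φ s ≤ c * (t / s) ^ (Mφ + σ))
    (hΨlow : ∀ s t : ℝ, 0 < s → s ≤ t → t ≤ 1 → c' * (t / s) ^ (mΨ - σ) ≤ Ψ t / Ψ s)
    (htail : ∀ r : ℝ, 0 < r →
      ∫⁻ h in {h : EuclideanSpace ℝ (Fin d) | r < ‖h‖},
        ENNReal.ofReal (1 / (‖h‖ ^ d * φ ‖h‖)) ≤ ENNReal.ofReal (C' / φ r)) :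
    ∃ C : ℝ, 0 < C ∧ ∀ r : ℝ, 0 < r → r ≤ 1 →
      ∫⁻ h : EuclideanSpace ℝ (Fin d),
        ENNReal.ofReal (Ψ (min ‖h‖ r) / (‖h‖ ^ d * φ ‖h‖))
        ≤ ENNReal.ofReal (C * Ψ r / φ r) :=
  aux_integral_inequality_general d hd φ Ψ Mφ mΨ σ c c' C' hMm hc hc' hC' hφpos hΨpos hφup hΨlow
    htail
end

section
/- Suppose (P_s) is a family of linear contractions on bounded continuous functions on ℝᵈ, commuting with translations (hence with the second-difference operator Δ²_h), such that ‖D²P_s g‖_∞ ≤ C₂ φ^{−1}(s)^{−2}‖g‖_∞ for all bounded g and s > 0, where φ^{−1}: (0,∞) → (0,∞) is increasing. Suppose f is bounded with finite ψ-Hölder seminorm [f]_{C^ψ}, and f_ε = f ∗ ρ_ε a mollification satisfying ‖f − f_ε‖_∞ ≤ C‖f‖_{C^ψ}ψ(ε) and ‖D²f_ε‖_∞ ≤ C‖f‖_{C^ψ}ψ(ε)ε^{−2}. Then for all s > 0 with φ^{−1}(s) ≤ 1, all x ∈ ℝᵈ and h ∈ ℝᵈ: |Δ²_h(P_s f)(x)|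 ≤ C'|h|² ‖f‖_{C^ψ} ψ(φ^{−1}(s)) / φ^{−1}(s)², with C' depending only on C, C₂. -/
/-!
Split `f = (f - f_ε) + f_ε` at the scale `ε = φ⁻¹(s)`. The rough part `f - f_ε` is uniformly
small, so the smoothing estimate bounds `D² P_s (f - f_ε)` and Taylor's bound turns this into a
bound on `Δ²_h P_s (f - f_ε)`. For the smooth part, `Δ²_h` commutes with `P_s`, so the
contraction property reduces `Δ²_h P_s f_ε` to `Δ²_h f_ε`, which Taylor's bound controls through
`D² f_ε`. Both contributions are of size `|h|² ‖f‖_{C^ψ} ψ(ε) / ε²`.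
-/

section Taylor

variable {E F : Type*} [NormedAddCommGroup E] [NormedSpace ℝ E]
  [NormedAddCommGroup F] [NormedSpace ℝ F] {g : E → F} {M : ℝ}

theorem norm_fderiv_sub_le_of_norm_iteratedFDeriv_two_le (hg : ContDiff ℝ 2 g)
    (hM : ∀ x, ‖iteratedFDeriv ℝ 2 g x‖ ≤ M) (x y : E) :
    ‖fderiv ℝ g y - fderiv ℝ g x‖ ≤ M * ‖y - x‖ := by
  have hD2 : ∀ z, ‖fderiv ℝ (fderiv ℝ g) z‖ ≤ M := fun z => calc
    ‖fderiv ℝ (fderiv ℝ g) z‖ = ‖iteratedFDeriv ℝ 0 (fderiv ℝ (fderiv ℝ g)) z‖ := by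
      rw [norm_iteratedFDeriv_zero]
    _ = ‖iteratedFDeriv ℝ 2 g z‖ := by
      rw [norm_iteratedFDeriv_fderiv, norm_iteratedFDeriv_fderiv]
    _ ≤ M := hM z
  have hdiff : Differentiable ℝ (fderiv ℝ g) :=
    (hg.fderiv_right (m := 1) (by norm_num)).differentiable (by norm_num)
  exact convex_univ.norm_image_sub_le_of_norm_fderiv_le (fun z _ => hdiff z) (fun z _ => hD2 z)
    (Set.mem_univ x) (Set.mem_univ y)

theorem norm_sub_sub_fderiv_le_of_norm_iteratedFDeriv_two_le (hg : ContDiff ℝ 2 g)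
    (hM : ∀ x, ‖iteratedFDeriv ℝ 2 g x‖ ≤ M) (x h : E) :
    ‖g (x + h) - g x - fderiv ℝ g x h‖ ≤ M * ‖h‖ ^ 2 := by
  have hM0 : 0 ≤ M := (norm_nonneg _).trans (hM x)
  have hlip : ∀ y ∈ Metric.closedBall x ‖h‖, ‖fderiv ℝ g y - fderiv ℝ g x‖ ≤ M * ‖h‖ :=
    fun y hy => (norm_fderiv_sub_le_of_norm_iteratedFDeriv_two_le hg hM x y).trans
      (mul_le_mul_of_nonneg_left (mem_closedBall_iff_norm.mp hy) hM0)
  have := (convex_closedBall x ‖h‖).norm_image_sub_le_of_norm_fderiv_le' (y := x + h)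
    (fun y _ => (hg.differentiable (by norm_num)) y) hlip
    (Metric.mem_closedBall_self (norm_nonneg h)) (by simp)
  rw [add_sub_cancel_left] at this
  linarith

end Taylor

def secondDiff {E : Type*} [AddGroup E] (g : E → ℝ) (h x : E) : ℝ :=
  g (x + h) - 2 * g x + g (x - h)

theorem secondDiff_add {E : Type*} [AddGroup E] (g₁ g₂ : E → ℝ) (h x : E) :
    secondDiff (g₁ + g₂) h x = secondDiff g₁ h x + secondDiff g₂ h x := by
  simp only [secondDiff, Pi.add_apply]
  ring

theorem abs_secondDiff_le {E : Type*} [NormedAddCommGroup E] [NormedSpace ℝ E]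
    {g : E → ℝ} (hg : ContDiff ℝ 2 g) {M : ℝ}
    (hM : ∀ x, ‖iteratedFDeriv ℝ 2 g x‖ ≤ M) (h x : E) :
    |secondDiff g h x| ≤ 2 * M * ‖h‖ ^ 2 := by
  have hplus := norm_sub_sub_fderiv_le_of_norm_iteratedFDeriv_two_le hg hM x h
  have hminus := norm_sub_sub_fderiv_le_of_norm_iteratedFDeriv_two_le hg hM x (-h)
  rw [← sub_eq_add_neg, map_neg, norm_neg] at hminus
  rw [Real.norm_eq_abs] at hplus hminus
  have hsplit : secondDiff g h x =
      (g (x + h) - g x - fderiv ℝ g x h) + (g (x - h) - g x - -fderiv ℝ g x h) := by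
    unfold secondDiff
    ring
  rw [hsplit]
  linarith [abs_add_le (g (x + h) - g x - fderiv ℝ g x h) (g (x - h) - g x - -fderiv ℝ g x h)]

theorem second_difference_semigroup_bound_general
    (d : ℕ) (ψ φinv : ℝ → ℝ) (C₂ Cm : ℝ) (hC₂ : 0 < C₂) (hCm : 0 < Cm)
    (hφinvpos : ∀ s : ℝ, 0 < s → 0 < φinv s)
    (P : ℝ → (EuclideanSpace ℝ (Fin d) → ℝ) → EuclideanSpace ℝ (Fin d) → ℝ)
    (hadd : ∀ (s : ℝ) (g₁ g₂ : EuclideanSpace ℝ (Fin d) → ℝ) x,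
      P s (g₁ + g₂) x = P s g₁ x + P s g₂ x)
    (hcontr : ∀ s : ℝ, 0 < s → ∀ (g : EuclideanSpace ℝ (Fin d) → ℝ) (B : ℝ),
      (∀ x, |g x| ≤ B) → ∀ x, |P s g x| ≤ B)
    (hcomm : ∀ (s : ℝ) (g : EuclideanSpace ℝ (Fin d) → ℝ) (h x : EuclideanSpace ℝ (Fin d)),
      P s g (x + h) - 2 * P s g x + P s g (x - h) =
        P s (fun y => g (y + h) - 2 * g y + g (y - h)) x)
    (hsmooth : ∀ s : ℝ, 0 < s → ∀ g : EuclideanSpace ℝ (Fin d) → ℝ, Continuous g →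
      ContDiff ℝ 2 (P s g))
    (hD2 : ∀ s : ℝ, 0 < s → ∀ (g : EuclideanSpace ℝ (Fin d) → ℝ) (B : ℝ),
      (∀ x, |g x| ≤ B) → ∀ x, ‖iteratedFDeriv ℝ 2 (P s g) x‖ ≤ C₂ / φinv s ^ 2 * B) :
    ∃ C' : ℝ, 0 < C' ∧
      ∀ (f : EuclideanSpace ℝ (Fin d) → ℝ), Continuous f →
      ∀ Bsup S : ℝ, (∀ x, |f x| ≤ Bsup) →
        (∀ (x h : EuclideanSpace ℝ (Fin d)), 0 < ‖h‖ → ‖h‖ ≤ 1 →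
          |f (x + h) - f x| ≤ S * ψ ‖h‖) →
      ∀ fε : ℝ → EuclideanSpace ℝ (Fin d) → ℝ,
        (∀ ε : ℝ, 0 < ε → ε ≤ 1 → ContDiff ℝ 2 (fε ε) ∧
          (∀ x, |f x - fε ε x| ≤ Cm * (Bsup + S) * ψ ε) ∧
          (∀ x, ‖iteratedFDeriv ℝ 2 (fε ε) x‖ ≤ Cm * (Bsup + S) * ψ ε / ε ^ 2)) →
      ∀ s : ℝ, 0 < s → φinv s ≤ 1 →
      ∀ (x h : EuclideanSpace ℝ (Fin d)),
        |P s f (x + h) - 2 * P s f x + P s f (x - h)| ≤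
          C' * ‖h‖ ^ 2 * (Bsup + S) * ψ (φinv s) / φinv s ^ 2 := by
  refine ⟨2 * (C₂ + 1) * Cm, by positivity, ?_⟩
  intro f hf Bsup S _ _ fε hfε s hs hs1 x h
  set ε := φinv s
  obtain ⟨hfε_smooth, hfε_close, hfε_D2⟩ := hfε ε (hφinvpos s hs) hs1
  have hsplit : P s f = P s (f - fε ε) + P s (fε ε) := by
    funext y
    rw [Pi.add_apply, ← hadd, sub_add_cancel]
  have hrough : |secondDiff (P s (f - fε ε)) h x| ≤
      2 * (C₂ / ε ^ 2 * (Cm * (Bsup + S) * ψ ε)) * ‖h‖ ^ 2 :=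
    abs_secondDiff_le (hsmooth s hs _ (hf.sub hfε_smooth.continuous))
      (hD2 s hs _ _ hfε_close) h x
  have hsmooth_part : |secondDiff (P s (fε ε)) h x| ≤
      2 * (Cm * (Bsup + S) * ψ ε / ε ^ 2) * ‖h‖ ^ 2 := by
    rw [secondDiff, hcomm]
    exact hcontr s hs _ _ (abs_secondDiff_le hfε_smooth hfε_D2 h) x
  change |secondDiff (P s f) h x| ≤ _
  rw [hsplit, secondDiff_add]
  calc _ ≤ |secondDiff (P s (f - fε ε)) h x| + |secondDiff (P s (fε ε)) h x| := abs_add_le _ _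
    _ ≤ _ := add_le_add hrough hsmooth_part
    _ = _ := by ring

/-- Key estimate (3.1): |Δ²_h(P_s f)(x)| ≤ C'|h|² ‖f‖_{C^ψ} ψ(φ⁻¹(s))/φ⁻¹(s)². -/
theorem second_difference_semigroup_bound
    (d : ℕ) (ψ φinv : ℝ → ℝ) (C₂ Cm : ℝ) (hC₂ : 0 < C₂) (hCm : 0 < Cm)
    (hψpos : ∀ r : ℝ, 0 < r → r ≤ 1 → 0 < ψ r)
    (hφinvpos : ∀ s : ℝ, 0 < s → 0 < φinv s)
    (hφinvmono : ∀ s t : ℝ, 0 < s → s ≤ t → φinv s ≤ φinv t)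
    (P : ℝ → (EuclideanSpace ℝ (Fin d) → ℝ) → EuclideanSpace ℝ (Fin d) → ℝ)
    (hadd : ∀ (s : ℝ) (g₁ g₂ : EuclideanSpace ℝ (Fin d) → ℝ) x,
      P s (g₁ + g₂) x = P s g₁ x + P s g₂ x)
    (hcontr : ∀ s : ℝ, 0 < s → ∀ (g : EuclideanSpace ℝ (Fin d) → ℝ) (B : ℝ),
      (∀ x, |g x| ≤ B) → ∀ x, |P s g x| ≤ B)
    (hcomm : ∀ (s : ℝ) (g : EuclideanSpace ℝ (Fin d) → ℝ) (h x : EuclideanSpace ℝ (Fin d)),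
      P s g (x + h) - 2 * P s g x + P s g (x - h) =
        P s (fun y => g (y + h) - 2 * g y + g (y - h)) x)
    (hsmooth : ∀ s : ℝ, 0 < s → ∀ g : EuclideanSpace ℝ (Fin d) → ℝ, Continuous g →
      ContDiff ℝ 2 (P s g))
    (hD2 : ∀ s : ℝ, 0 < s → ∀ (g : EuclideanSpace ℝ (Fin d) → ℝ) (B : ℝ),
      (∀ x, |g x| ≤ B) → ∀ x, ‖iteratedFDeriv ℝ 2 (P s g) x‖ ≤ C₂ / φinv s ^ 2 * B) :
    ∃ C' : ℝ, 0 < C' ∧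
      ∀ (f : EuclideanSpace ℝ (Fin d) → ℝ), Continuous f →
      ∀ Bsup S : ℝ, (∀ x, |f x| ≤ Bsup) →
        (∀ (x h : EuclideanSpace ℝ (Fin d)), 0 < ‖h‖ → ‖h‖ ≤ 1 →
          |f (x + h) - f x| ≤ S * ψ ‖h‖) →
      ∀ fε : ℝ → EuclideanSpace ℝ (Fin d) → ℝ,
        (∀ ε : ℝ, 0 < ε → ε ≤ 1 → ContDiff ℝ 2 (fε ε) ∧
          (∀ x, |f x - fε ε x| ≤ Cm * (Bsup + S) * ψ ε) ∧
          (∀ x, ‖iteratedFDeriv ℝ 2 (fε ε) x‖ ≤ Cm * (Bsup + S) * ψ ε / ε ^ 2)) →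
      ∀ s : ℝ, 0 < s → φinv s ≤ 1 →
      ∀ (x h : EuclideanSpace ℝ (Fin d)),
        |P s f (x + h) - 2 * P s f x + P s f (x - h)| ≤
          C' * ‖h‖ ^ 2 * (Bsup + S) * ψ (φinv s) / φinv s ^ 2 :=
  second_difference_semigroup_bound_general d ψ φinv C₂ Cm hC₂ hCm hφinvpos P hadd hcontr hcomm
    hsmooth hD2
end
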